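/- For every ν > 0 and every x > -ν, 2(x+ν) p_ν(x) = -∫_{-ν}^{x} u p_ν(u) du, where p_ν(x) = (x+ν)^{ν/2-1} e^{-(x+ν)/2}/(2^{ν/2}Γ(ν/2)). -/

import Mathlib

/-! The function `F(u) = -2 (u+ν)^{ν/2} e^{-(u+ν)/2} / (2^{ν/2} Γ(ν/2))` is a primitive of
`u p_ν(u)` on `(-ν, ∞)`, vanishes at `-ν` and equals `-2 (u+ν) p_ν(u)`; the identity is the
fundamental theorem of calculus for `F` on `[-ν, x]`. -/

open MeasureTheory Real intervalIntegral

/-- Density of the centered Gamma law `F(ν)`. -/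
noncomputable def pnu (ν : ℝ) (x : ℝ) : ℝ :=
  if -ν < x then (x + ν) ^ (ν / 2 - 1) * Real.exp (-(x + ν) / 2) /
    (2 ^ (ν / 2) * Real.Gamma (ν / 2)) else 0

namespace Pnu

noncomputable def primitive (ν u : ℝ) : ℝ :=
  -2 * ((u + ν) ^ (ν / 2) * exp (-(u + ν) / 2)) / (2 ^ (ν / 2) * Gamma (ν / 2))

variable {ν : ℝ}

lemma pnu_of_lt {x : ℝ} (hx : -ν < x) :
    pnu ν x = (x + ν) ^ (ν / 2 - 1) * exp (-(x + ν) / 2) / (2 ^ (ν / 2) * Gamma (ν / 2)) :=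
  if_pos hx

lemma primitive_eq_mul_pnu {x : ℝ} (hx : -ν < x) :
    primitive ν x = -2 * (x + ν) * pnu ν x := by
  have hpos : 0 < x + ν := by linarith
  rw [primitive, pnu_of_lt hx, rpow_sub_one hpos.ne']
  field_simp

lemma primitive_neg_self (hν : 0 < ν) : primitive ν (-ν) = 0 := by
  rw [primitive, neg_add_cancel, zero_rpow (by positivity)]
  ring

lemma continuous_primitive (hν : 0 < ν) : Continuous (primitive ν) := by
  unfold primitive
  fun_prop (disch := positivity)

lemma hasDerivAt_primitive {u : ℝ} (hu : -ν < u) :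
    HasDerivAt (primitive ν) (u * pnu ν u) u := by
  have hshift : HasDerivAt (fun u : ℝ => u + ν) 1 u := (hasDerivAt_id u).add_const ν
  have hpow : HasDerivAt (fun u : ℝ => (u + ν) ^ (ν / 2))
      (ν / 2 * (u + ν) ^ (ν / 2 - 1)) u := by
    simpa using hshift.rpow_const (p := ν / 2) (Or.inl (by linarith))
  have hexp : HasDerivAt (fun u : ℝ => exp (-(u + ν) / 2)) (exp (-(u + ν) / 2) * (-1 / 2)) u :=
    (hshift.neg.div_const 2).exp
  refine (((hpow.mul hexp).const_mul (-2)).div_const (2 ^ (ν / 2) * Gamma (ν / 2))).congr_deriv ?_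
  have hpos : 0 < u + ν := by linarith
  rw [pnu_of_lt hu, rpow_sub_one hpos.ne']
  field_simp
  ring

lemma intervalIntegrable_pnu (hν : 0 < ν) {x : ℝ} (hx : -ν ≤ x) :
    IntervalIntegrable (pnu ν) volume (-ν) x := by
  have hpow : IntervalIntegrable (fun u : ℝ => (u + ν) ^ (ν / 2 - 1)) volume (-ν) x := by
    simpa using (intervalIntegrable_rpow' (a := 0) (b := x + ν) (r := ν / 2 - 1)
      (by linarith)).comp_add_right ν
  have hprod := hpow.continuousOn_mul (g := fun u =>
    exp (-(u + ν) / 2) / (2 ^ (ν / 2) * Gamma (ν / 2))) (by fun_prop)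
  rw [intervalIntegrable_iff, Set.uIoc_of_le hx] at hprod ⊢
  refine hprod.congr_fun (fun u hu => ?_) measurableSet_Ioc
  rw [pnu_of_lt hu.1]
  ring

end Pnu

/-- Fundamental identity `2(x+ν) p_ν(x) = -∫_{-ν}^x u p_ν(u) du` for `x > -ν`. -/
theorem pnu_fundamental_identity (ν : ℝ) (hν : 0 < ν) (x : ℝ) (hx : -ν < x) :
    2 * (x + ν) * pnu ν x = -∫ u in (-ν)..x, u * pnu ν u := by
  rw [integral_eq_sub_of_hasDerivAt_of_le hx.le (Pnu.continuous_primitive hν).continuousOn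
      (fun u hu => Pnu.hasDerivAt_primitive hu.1)
      ((Pnu.intervalIntegrable_pnu hν hx.le).continuousOn_mul continuousOn_id),
    Pnu.primitive_neg_self hν, Pnu.primitive_eq_mul_pnu hx]
  ring
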